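/- For every n ≥ 1, the minimum number of maximal fragments (placed anywhere in the infinite triangular grid, allowed to overlap each other and to extend outside the board) whose union contains the triangular board T_n of side n equals ⌈n²/4⌉. -/

import Mathlib

/-- A cell of the infinite triangular grid: coordinates `(x, y)` together with an
orientation (`0` = upward triangle, `1` = downward triangle). -/
structure TCell where
  x : ℤ
  y : ℤ
  o : Fin 2
deriving DecidableEq

/-- The three cells adjacent to a given cell of the triangular grid: the downward cell
`(x, y, 1)` is adjacent to exactly the upward cells `(x, y, 0)`, `(x+1, y, 0)` and
`(x, y+1, 0)`, and adjacency is symmetric. -/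
def TNbrs (c : TCell) : Set TCell :=
  if c.o = 0 then {⟨c.x, c.y, 1⟩, ⟨c.x - 1, c.y, 1⟩, ⟨c.x, c.y - 1, 1⟩}
  else {⟨c.x, c.y, 0⟩, ⟨c.x + 1, c.y, 0⟩, ⟨c.x, c.y + 1, 0⟩}

/-- The maximal fragment determined by `c`: the cell `c` together with its three
adjacent cells. -/
def MaxFrag (c : TCell) : Set TCell := insert c (TNbrs c)

/-- The triangular board of side `n`. -/
def TBoard (n : ℕ) : Set TCell :=
  {c : TCell | 0 ≤ c.x ∧ 0 ≤ c.y ∧ c.x + c.y + (c.o : ℤ) ≤ (n : ℤ) - 1}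

/-!
A fragment has at most four cells and `T_n` has `n²`, so at least `⌈n² / 4⌉` fragments are needed.
The plane is tiled by the fragments centred at the downward cells `(2u, 2v, 1)` and the upward
cells `(2u + 1, 2v + 1, 0)`; those of them centred on the antidiagonals `x + y = 2t`, `t < k`,
tile `T_{2k}` exactly, which settles even `n`. For `n = 2p + s` with `s ≤ p + r`, the board is
the union of three copies of `T_{2p}` at its corners and a point-reflected copy of `T_{2r}` in the
middle, so `3p² + r²` fragments suffice; `(p, r, s) = (q, q + 1, 2q + 1)` for `n = 4q + 1` and
`(q + 1, q, 2q + 1)` for `n = 4q + 3` give `(n² + 3) / 4`.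
-/

open Finset

namespace TCell

def shift (a b : ℤ) (c : TCell) : TCell := ⟨c.x + a, c.y + b, c.o⟩

def reflect (s : ℤ) (c : TCell) : TCell := ⟨s - c.y, s - c.x, 1 - c.o⟩

lemma mapsTo_shift (a b : ℤ) (c : TCell) :
    Set.MapsTo (shift a b) (MaxFrag c) (MaxFrag (shift a b c)) := by
  obtain ⟨x, y, o⟩ := c
  rintro z (rfl | hz)
  · exact Set.mem_insert _ _
  · fin_cases o <;> simp only [TNbrs] at hz <;> rcases hz with rfl | rfl | rfl <;>
      simp [MaxFrag, TNbrs, shift] <;> ring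

lemma mapsTo_reflect (s : ℤ) (c : TCell) :
    Set.MapsTo (reflect s) (MaxFrag c) (MaxFrag (reflect s c)) := by
  obtain ⟨x, y, o⟩ := c
  rintro z (rfl | hz)
  · exact Set.mem_insert _ _
  · fin_cases o <;> simp only [TNbrs] at hz <;> rcases hz with rfl | rfl | rfl <;>
      simp [MaxFrag, TNbrs, reflect] <;> ring

end TCell

lemma image_subset_biUnion_maxFrag {f : TCell → TCell}
    (hf : ∀ c, Set.MapsTo f (MaxFrag c) (MaxFrag (f c))) {S : Set TCell} {F : Finset TCell}
    (h : S ⊆ ⋃ c ∈ F, MaxFrag c) : f '' S ⊆ ⋃ c ∈ F.image f, MaxFrag c := by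
  rintro _ ⟨z, hz, rfl⟩
  obtain ⟨c, hc, hzc⟩ := Set.mem_iUnion₂.mp (h hz)
  exact Set.mem_iUnion₂.mpr ⟨f c, mem_image_of_mem f hc, hf c hzc⟩

lemma union_subset_biUnion_maxFrag {S T : Set TCell} {F G : Finset TCell}
    (hS : S ⊆ ⋃ c ∈ F, MaxFrag c) (hT : T ⊆ ⋃ c ∈ G, MaxFrag c) :
    S ∪ T ⊆ ⋃ c ∈ F ∪ G, MaxFrag c := by
  rw [Finset.set_biUnion_union]
  exact Set.union_subset_union hS hT

lemma mk_mem_tBoard {n : ℕ} {x y : ℤ} {o : Fin 2} :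
    (⟨x, y, o⟩ : TCell) ∈ TBoard n ↔ 0 ≤ x ∧ 0 ≤ y ∧ x + y + (o : ℤ) ≤ (n : ℤ) - 1 :=
  Iff.rfl

def tileCenter (x y : ℤ) : TCell := ⟨x, y, if Even x then 1 else 0⟩

def boardTiling (k : ℕ) : Finset TCell :=
  (range k).biUnion fun t => (range (2 * t + 1)).image fun i : ℕ => tileCenter i (2 * t - i)

lemma sum_range_two_mul_add_one (k : ℕ) : ∑ t ∈ range k, (2 * t + 1) = k * k := by
  induction k with
  | zero => rfl
  | succ k ih => rw [sum_range_succ, ih]; ring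

lemma card_boardTiling_le (k : ℕ) : #(boardTiling k) ≤ k * k :=
  calc #(boardTiling k) ≤ ∑ t ∈ range k, (2 * t + 1) :=
        card_biUnion_le.trans <| sum_le_sum fun _ _ => card_image_le.trans (card_range _).le
    _ = k * k := sum_range_two_mul_add_one k

lemma tileCenter_mem_boardTiling {k : ℕ} {x y : ℤ} (hx : 0 ≤ x) (hy : 0 ≤ y)
    (hxy : x + y ≤ 2 * k - 2) (heven : Even (x + y)) : tileCenter x y ∈ boardTiling k := by
  obtain ⟨t, ht⟩ := heven
  refine mem_biUnion.mpr ⟨t.toNat, mem_range.mpr (by omega),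
    mem_image.mpr ⟨x.toNat, mem_range.mpr (by omega), ?_⟩⟩
  congr 1 <;> omega

lemma tBoard_two_mul_subset_boardTiling (k : ℕ) :
    TBoard (2 * k) ⊆ ⋃ c ∈ boardTiling k, MaxFrag c := by
  rintro ⟨x, y, o⟩ hc
  obtain ⟨hx, hy, hxy⟩ := mk_mem_tBoard.mp hc
  suffices ∃ a b : ℤ, 0 ≤ a ∧ 0 ≤ b ∧ a + b ≤ 2 * k - 2 ∧ Even (a + b) ∧
      ⟨x, y, o⟩ ∈ MaxFrag (tileCenter a b) by
    obtain ⟨a, b, ha, hb, hab, heven, hmem⟩ := this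
    exact Set.mem_iUnion₂.mpr ⟨_, tileCenter_mem_boardTiling ha hb hab heven, hmem⟩
  -- `⟨x, y, o⟩` lies in the tile centred at `(2⌊x/2⌋, 2⌊y/2⌋)` or at `(2⌊x/2⌋ + 1, 2⌊y/2⌋ + 1)`.
  obtain ⟨u, rfl | rfl⟩ := Int.even_or_odd' x <;> obtain ⟨v, rfl | rfl⟩ := Int.even_or_odd' y <;>
    fin_cases o <;> dsimp only at hxy
  all_goals first
    | refine ⟨2 * u, 2 * v, by omega, by omega, by omega, Int.even_iff.mpr (by omega), ?_⟩
      simp [MaxFrag, TNbrs, tileCenter, parity_simps]; done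
    | refine ⟨2 * u + 1, 2 * v + 1, by omega, by omega, by omega, Int.even_iff.mpr (by omega), ?_⟩
      simp [MaxFrag, TNbrs, tileCenter, parity_simps]

section Corners

open TCell

lemma tBoard_two_mul_add_subset (p r s : ℕ) (hs : s ≤ p + r) :
    TBoard (2 * p + s) ⊆ TBoard (2 * p) ∪ shift s 0 '' TBoard (2 * p) ∪
      shift 0 s '' TBoard (2 * p) ∪ reflect (s - 1) '' TBoard (2 * r) := by
  rintro ⟨x, y, o⟩ hc
  obtain ⟨hx, hy, hxy⟩ := mk_mem_tBoard.mp hc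
  push_cast at hxy
  by_cases h₁ : x + y + o ≤ 2 * p - 1
  · exact Or.inl (Or.inl (Or.inl (mk_mem_tBoard.mpr ⟨hx, hy, by simpa using h₁⟩)))
  by_cases h₂ : s ≤ x
  · refine Or.inl (Or.inl (Or.inr ⟨⟨x - s, y, o⟩, ?_, by simp [shift]⟩))
    exact mk_mem_tBoard.mpr ⟨by omega, hy, by omega⟩
  by_cases h₃ : s ≤ y
  · refine Or.inl (Or.inr ⟨⟨x, y - s, o⟩, ?_, by simp [shift]⟩)
    exact mk_mem_tBoard.mpr ⟨hx, by omega, by omega⟩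
  refine Or.inr ⟨⟨s - 1 - y, s - 1 - x, 1 - o⟩, mk_mem_tBoard.mpr ⟨by omega, by omega, ?_⟩,
    by simp [reflect]⟩
  fin_cases o <;> simp only [Fin.mk_one] at h₁ ⊢ <;> omega

lemma exists_cover_tBoard_two_mul_add (p r s : ℕ) (hs : s ≤ p + r) :
    ∃ C : Finset TCell, TBoard (2 * p + s) ⊆ ⋃ c ∈ C, MaxFrag c ∧ #C ≤ 3 * (p * p) + r * r := by
  refine ⟨boardTiling p ∪ (boardTiling p).image (shift s 0) ∪ (boardTiling p).image (shift 0 s) ∪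
    (boardTiling r).image (reflect (s - 1)), ?_, ?_⟩
  · refine (tBoard_two_mul_add_subset p r s hs).trans <|
      union_subset_biUnion_maxFrag (union_subset_biUnion_maxFrag (union_subset_biUnion_maxFrag
        (tBoard_two_mul_subset_boardTiling p) ?_) ?_) ?_
    · exact image_subset_biUnion_maxFrag (mapsTo_shift s 0) (tBoard_two_mul_subset_boardTiling p)
    · exact image_subset_biUnion_maxFrag (mapsTo_shift 0 s) (tBoard_two_mul_subset_boardTiling p)
    · exact image_subset_biUnion_maxFrag (mapsTo_reflect _) (tBoard_two_mul_subset_boardTiling r)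
  · have hp := card_boardTiling_le p
    have hr := card_boardTiling_le r
    grw [card_union_le, card_union_le, card_union_le, card_image_le, card_image_le, card_image_le]
    omega

end Corners

lemma exists_cover_tBoard (n : ℕ) :
    ∃ C : Finset TCell, TBoard n ⊆ ⋃ c ∈ C, MaxFrag c ∧ 4 * #C ≤ n * n + 3 := by
  obtain ⟨k, rfl | rfl⟩ := Nat.even_or_odd' n
  · refine ⟨boardTiling k, tBoard_two_mul_subset_boardTiling k, ?_⟩
    nlinarith [card_boardTiling_le k]
  obtain ⟨q, rfl | rfl⟩ := Nat.even_or_odd' k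
  · obtain ⟨C, hC, hcard⟩ := exists_cover_tBoard_two_mul_add q (q + 1) (2 * q + 1) (by omega)
    refine ⟨C, by convert hC using 2; ring, by nlinarith⟩
  · obtain ⟨C, hC, hcard⟩ := exists_cover_tBoard_two_mul_add (q + 1) q (2 * q + 1) (by omega)
    refine ⟨C, by convert hC using 2; ring, by nlinarith⟩

lemma encard_maxFrag_le (c : TCell) : (MaxFrag c).encard ≤ 4 := by
  have h : ∀ a b d : TCell, ({a, b, d} : Set TCell).encard ≤ 3 := fun a b d => by
    grw [Set.encard_insert_le, Set.encard_insert_le, Set.encard_singleton]; norm_num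
  grw [MaxFrag, Set.encard_insert_le, TNbrs]
  split_ifs
  · grw [h]; norm_num
  · grw [h]; norm_num

lemma mul_self_le_encard_tBoard (n : ℕ) : (n * n : ℕ∞) ≤ (TBoard n).encard := by
  -- Fold the square `[0, n)²` along its antidiagonal onto the board: the upward cells come from
  -- the points below it, the downward cells from the (point-reflected) points on or above it.
  let fold : ℕ × ℕ → TCell := fun p =>
    if p.1 + p.2 < n then ⟨p.1, p.2, 0⟩ else ⟨n - 1 - p.1, n - 1 - p.2, 1⟩
  have hmaps : Set.MapsTo fold ↑(range n ×ˢ range n) (TBoard n) := by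
    rintro ⟨i, j⟩ hij
    simp only [coe_product, coe_range, Set.mem_prod, Set.mem_Iio] at hij
    by_cases h : i + j < n <;> simp [fold, TBoard, h] <;> omega
  have hinj : Set.InjOn fold ↑(range n ×ˢ range n) := by
    rintro ⟨i, j⟩ hij ⟨i', j'⟩ hij' heq
    simp only [coe_product, coe_range, Set.mem_prod, Set.mem_Iio] at hij hij'
    by_cases h : i + j < n <;> by_cases h' : i' + j' < n <;> simp [fold, h, h'] at heq ⊢ <;> omega
  calc (n * n : ℕ∞) = (↑(range n ×ˢ range n) : Set (ℕ × ℕ)).encard := by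
        rw [Set.encard_coe_eq_coe_finsetCard, card_product, card_range, Nat.cast_mul]
    _ ≤ (TBoard n).encard := Set.encard_le_encard_of_injOn hmaps hinj

lemma mul_self_le_four_mul_card_of_cover {n : ℕ} {C : Finset TCell}
    (hC : TBoard n ⊆ ⋃ c ∈ C, MaxFrag c) :
    n * n ≤ 4 * #C := by
  have : (n * n : ℕ∞) ≤ 4 * #C :=
    calc (n * n : ℕ∞) ≤ (TBoard n).encard := mul_self_le_encard_tBoard n
      _ ≤ (⋃ c ∈ C, MaxFrag c).encard := Set.encard_le_encard hC
      _ ≤ ∑ c ∈ C, (MaxFrag c).encard := C.set_encard_biUnion_le _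
      _ ≤ ∑ _c ∈ C, 4 := sum_le_sum fun c _ => encard_maxFrag_le c
      _ = 4 * #C := by rw [sum_const, nsmul_eq_mul, mul_comm]
  exact_mod_cast this

lemma ceil_sq_div_four (n : ℕ) : ⌈(n : ℚ) ^ 2 / 4⌉ = ((n * n + 3) / 4 : ℕ) := by
  have h : (n : ℚ) ^ 2 / 4 = ((n * n : ℕ) : ℚ) / ((4 : ℕ) : ℚ) := by push_cast; ring
  rw [h, Rat.ceil_natCast_div_natCast]
  omega

theorem min_maxFrag_cover_triangular_general (n : ℕ) :
    ((sInf {k : ℕ | ∃ C : Finset TCell,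
        TBoard n ⊆ (⋃ c ∈ C, MaxFrag c) ∧ C.card = k} : ℕ) : ℤ) =
      ⌈(n : ℚ) ^ 2 / 4⌉ := by
  have hleast : IsLeast {k : ℕ | ∃ C : Finset TCell,
      TBoard n ⊆ (⋃ c ∈ C, MaxFrag c) ∧ C.card = k} ((n * n + 3) / 4) := by
    obtain ⟨C, hC, hcard⟩ := exists_cover_tBoard n
    have hlower := mul_self_le_four_mul_card_of_cover hC
    refine ⟨⟨C, hC, by omega⟩, ?_⟩
    rintro _ ⟨C', hC', rfl⟩
    have hlower' := mul_self_le_four_mul_card_of_cover hC'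
    omega
  rw [hleast.csInf_eq, ceil_sq_div_four]

/-- For `n ≥ 1`, the minimum number of maximal fragments (placed anywhere
in the triangular grid, allowed to overlap and to extend outside the board) whose union
contains the triangular board of side `n` equals `⌈n²/4⌉`. -/
theorem min_maxFrag_cover_triangular (n : ℕ) (hn : 1 ≤ n) :
    ((sInf {k : ℕ | ∃ C : Finset TCell,
        TBoard n ⊆ (⋃ c ∈ C, MaxFrag c) ∧ C.card = k} : ℕ) : ℤ) =
      ⌈(n : ℚ) ^ 2 / 4⌉ :=
  min_maxFrag_cover_triangular_general n
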